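/- arXiv:2207.09559 — 5 statements merged into one kernel-verified Lean document; each statement's English description precedes it below -/
import Mathlib

section
/- Let n ≥ 1 and let F : ℝⁿ → ℝ satisfy (i) F(0) ≤ F(x) for all x, (ii) F(x) ≤ ‖x‖²/2 + F(0) for all x, and (iii) the map x ↦ ‖x‖²/2 − F(x) is convex. Then for all x, k ∈ ℝⁿ: if ‖k‖ ≤ ‖x‖ then F(x − k) − F(x) ≥ −‖k‖·‖x‖ + ‖k‖²/2, and if ‖k‖ ≥ ‖x‖ then F(x − k) − F(x) ≥ −‖x‖²/2. -/
/-!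
Put `G x = ‖x‖² / 2 - F x`, a convex function with `G z - G x ≤ ‖z‖² / 2` by (i) and (ii).
For `0 < ‖k‖ ≤ ‖x‖` write `x - k` as the convex combination `(1 - t) x + t z` with
`t = ‖k‖ / ‖x‖` and `z = x - (‖x‖ / ‖k‖) k`; convexity gives
`G (x - k) - G x ≤ t (G z - G x) ≤ t ‖z‖² / 2 = ‖k‖ ‖x‖ - ⟪x, k⟫`, and expanding
`‖x - k‖²` turns this into the first bound. The second bound is (i) at `x - k` plus (ii) at `x`.
-/

open RealInnerProductSpace

section ConvexCombination

variable {E : Type*} [NormedAddCommGroup E] [InnerProductSpace ℝ E]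

lemma convexCombination_eq_sub {x k : E} (hx : x ≠ 0) (hk : k ≠ 0) :
    (1 - ‖k‖ / ‖x‖) • x + (‖k‖ / ‖x‖) • (x - (‖x‖ / ‖k‖) • k) = x - k := by
  have hxk : ‖k‖ / ‖x‖ * (‖x‖ / ‖k‖) = 1 := by
    field_simp [norm_ne_zero_iff.mpr hx, norm_ne_zero_iff.mpr hk]
  rw [smul_sub, smul_smul, hxk, one_smul, sub_smul, one_smul]
  abel

lemma norm_div_norm_mul_norm_sub_smul_sq {x k : E} (hx : x ≠ 0) (hk : k ≠ 0) :
    ‖k‖ / ‖x‖ * ‖x - (‖x‖ / ‖k‖) • k‖ ^ 2 = 2 * (‖k‖ * ‖x‖ - ⟪x, k⟫) := by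
  have hx' := norm_pos_iff.mpr hx
  have hk' := norm_pos_iff.mpr hk
  rw [norm_sub_sq_real, real_inner_smul_right, norm_smul, Real.norm_eq_abs,
    abs_of_pos (div_pos hx' hk')]
  field_simp
  ring

lemma ConvexOn.sub_le_norm_mul_norm_sub_inner {G : E → ℝ} (hG : ConvexOn ℝ Set.univ G)
    (hosc : ∀ x z, G z - G x ≤ ‖z‖ ^ 2 / 2) {x k : E} (hkx : ‖k‖ ≤ ‖x‖) :
    G (x - k) - G x ≤ ‖k‖ * ‖x‖ - ⟪x, k⟫ := by
  rcases eq_or_ne k 0 with rfl | hk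
  · simp
  have hx : x ≠ 0 := norm_pos_iff.mp ((norm_pos_iff.mpr hk).trans_le hkx)
  set t := ‖k‖ / ‖x‖
  set z := x - (‖x‖ / ‖k‖) • k
  have ht : 0 ≤ t := by positivity
  have ht1 : t ≤ 1 := div_le_one_of_le₀ hkx (norm_nonneg x)
  have hconv : G (x - k) ≤ (1 - t) * G x + t * G z := by
    have h := hG.2 (Set.mem_univ x) (Set.mem_univ z) (sub_nonneg.mpr ht1) ht (sub_add_cancel 1 t)
    rwa [convexCombination_eq_sub hx hk] at h
  have hz : t * (G z - G x) ≤ t * (‖z‖ ^ 2 / 2) := mul_le_mul_of_nonneg_left (hosc x z) ht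
  have hnorm := norm_div_norm_mul_norm_sub_smul_sq hx hk
  linarith

end ConvexCombination

theorem stmt0_general (n : ℕ) (F : EuclideanSpace ℝ (Fin n) → ℝ)
    (h1 : ∀ x, F 0 ≤ F x)
    (h2 : ∀ x, F x ≤ ‖x‖ ^ 2 / 2 + F 0)
    (h3 : ConvexOn ℝ Set.univ fun x => ‖x‖ ^ 2 / 2 - F x) :
    ∀ x k : EuclideanSpace ℝ (Fin n),
      (‖k‖ ≤ ‖x‖ → F (x - k) - F x ≥ -(‖k‖ * ‖x‖) + ‖k‖ ^ 2 / 2) ∧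
      (‖x‖ ≤ ‖k‖ → F (x - k) - F x ≥ -(‖x‖ ^ 2) / 2) := by
  intro x k
  refine ⟨fun hkx => ?_, fun _ => by linarith [h1 (x - k), h2 x]⟩
  have hosc (x z : EuclideanSpace ℝ (Fin n)) :
      (‖z‖ ^ 2 / 2 - F z) - (‖x‖ ^ 2 / 2 - F x) ≤ ‖z‖ ^ 2 / 2 := by
    linarith [h1 z, h2 x]
  have hG := h3.sub_le_norm_mul_norm_sub_inner hosc hkx
  linarith [norm_sub_sq_real x k]

theorem stmt0 (n : ℕ) (hn : 1 ≤ n) (F : EuclideanSpace ℝ (Fin n) → ℝ)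
    (h1 : ∀ x, F 0 ≤ F x)
    (h2 : ∀ x, F x ≤ ‖x‖ ^ 2 / 2 + F 0)
    (h3 : ConvexOn ℝ Set.univ fun x => ‖x‖ ^ 2 / 2 - F x) :
    ∀ x k : EuclideanSpace ℝ (Fin n),
      (‖k‖ ≤ ‖x‖ → F (x - k) - F x ≥ -(‖k‖ * ‖x‖) + ‖k‖ ^ 2 / 2) ∧
      (‖x‖ ≤ ‖k‖ → F (x - k) - F x ≥ -(‖x‖ ^ 2) / 2) :=
  stmt0_general n F h1 h2 h3
end

section
/- Let f and (fₙ)_{n∈ℕ} be convex functions from ℝ to ℝ with fₙ → f pointwise on ℝ. Then there exists a set D ⊆ ℝ whose complement has Lebesgue measure zero such that: (a) for every x ∈ D and every n ∈ ℕ, the function fₙ is twice differentiable at x and fₙ''(x) ≥ 0; (b) for every x ∈ D, liminf_{n→∞} fₙ''(x) < ∞. -/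
/-!
The right derivative of a convex function is monotone and extends `deriv f`; by Lebesgue's
theorem it is differentiable a.e., with derivative the density of its Stieltjes measure `f''`.
The mass `fₙ''` gives to a bounded interval is bounded by a difference of two difference
quotients of `fₙ`, and these converge to those of `f`. Fatou's lemma then makes
`liminf fₙ''` integrable on every bounded interval, hence finite a.e.
-/

open Set Filter MeasureTheory Topology
open scoped ENNReal

section Rademacher

variable {E F : Type*} [NormedAddCommGroup E] [NormedSpace ℝ E] [FiniteDimensional ℝ E]
  [MeasurableSpace E] [BorelSpace E] [NormedAddCommGroup F] [NormedSpace ℝ F]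
  [FiniteDimensional ℝ F] {μ : Measure E} [μ.IsAddHaarMeasure]

theorem LocallyLipschitz.ae_differentiableAt {f : E → F} (hf : LocallyLipschitz f) :
    ∀ᵐ x ∂μ, DifferentiableAt ℝ f x := by
  have hball : ∀ k : ℕ, ∀ᵐ x ∂μ, x ∈ Metric.ball (0 : E) k → DifferentiableAt ℝ f x := by
    intro k
    obtain ⟨K, hK⟩ := (hf.locallyLipschitzOn (s := Metric.closedBall (0 : E) k))
      |>.exists_lipschitzOnWith_of_compact (isCompact_closedBall 0 k)
    filter_upwards [(hK.mono Metric.ball_subset_closedBall).ae_differentiableWithinAt_of_mem]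
      with x hx hxk
    exact (hx hxk).differentiableAt (Metric.isOpen_ball.mem_nhds hxk)
  filter_upwards [ae_all_iff.2 hball] with x hx
  obtain ⟨k, hk⟩ := exists_nat_gt ‖x‖
  exact hx k (mem_ball_zero_iff.2 hk)

end Rademacher

theorem ae_liminf_rnDeriv_lt_top_of_frequently_le {α : Type*} [MeasurableSpace α]
    {μ : ℕ → Measure α} {ν : Measure α} {s : Set α} (hs : MeasurableSet s) {C : ℝ≥0∞}
    (hC : C ≠ ∞) (hμ : ∃ᶠ n in atTop, μ n s ≤ C) :
    ∀ᵐ x ∂ν, x ∈ s → liminf (fun n => (μ n).rnDeriv ν x) atTop < ∞ := by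
  have hmeas : ∀ n, Measurable ((μ n).rnDeriv ν) := fun n => Measure.measurable_rnDeriv _ _
  have fatou : ∫⁻ x in s, liminf (fun n => (μ n).rnDeriv ν x) atTop ∂ν ≤ C :=
    (lintegral_liminf_le hmeas).trans <| liminf_le_of_frequently_le' <|
      hμ.mono fun n hn => (Measure.setLIntegral_rnDeriv_le s).trans hn
  rw [← ae_restrict_iff' hs]
  exact ae_lt_top (.liminf hmeas) (fatou.trans_lt hC.lt_top).ne

theorem liminf_toReal_lt_top {ι : Type*} {l : Filter ι} {u : ι → ℝ≥0∞}
    (hu : liminf u l < ∞) : liminf (fun i => ((u i).toReal : EReal)) l < ⊤ := by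
  obtain ⟨M, hlt, hM⟩ := exists_between hu
  refine (liminf_le_of_frequently_le' ((frequently_lt_of_liminf_lt (h := hlt)).mono
    fun i hi => ?_)).trans_lt (EReal.coe_lt_top M.toReal)
  exact EReal.coe_le_coe_iff.2 (ENNReal.toReal_mono hM.ne hi.le)

theorem Monotone.stieltjesFunction_measure_Ioc_le {φ : ℝ → ℝ} (hφ : Monotone φ) {a b c : ℝ}
    (hbc : b < c) : hφ.stieltjesFunction.measure (Ioc a b) ≤ ENNReal.ofReal (φ c - φ a) := by
  rw [StieltjesFunction.measure_Ioc, hφ.stieltjesFunction_eq, hφ.stieltjesFunction_eq]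
  gcongr
  · exact hφ.rightLim_le hbc
  · exact hφ.le_rightLim le_rfl

namespace ConvexOn

variable {f : ℝ → ℝ}

theorem ae_differentiableAt (hf : ConvexOn ℝ univ f) : ∀ᵐ x, DifferentiableAt ℝ f x :=
  (locallyLipschitzOn_univ.1 (hf.locallyLipschitzOn isOpen_univ)).ae_differentiableAt

theorem monotone_rightDeriv (hf : ConvexOn ℝ univ f) :
    Monotone fun x => derivWithin f (Ioi x) x := by
  simpa using hf.monotoneOn_rightDeriv

theorem slope_le_rightDeriv (hf : ConvexOn ℝ univ f) {x y : ℝ} (hxy : x < y) :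
    slope f x y ≤ derivWithin f (Ioi y) y :=
  (hf.slope_le_leftDeriv_of_mem_interior (mem_univ x) (by simp) hxy).trans
    (hf.leftDeriv_le_rightDeriv_of_mem_interior (by simp))

/-- The distributional second derivative `f''` of a convex function, as a Radon measure. -/
noncomputable def secondDerivMeasure (hf : ConvexOn ℝ univ f) : Measure ℝ :=
  hf.monotone_rightDeriv.stieltjesFunction.measure

theorem ae_hasDerivAt_rightDeriv (hf : ConvexOn ℝ univ f) :
    ∀ᵐ x, HasDerivAt (fun y => derivWithin f (Ioi y) y)
      (hf.secondDerivMeasure.rnDeriv volume x).toReal x :=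
  hf.monotone_rightDeriv.ae_hasDerivAt

theorem secondDerivMeasure_Ioc_le (hf : ConvexOn ℝ univ f) (a b : ℝ) :
    hf.secondDerivMeasure (Ioc a b) ≤
      ENNReal.ofReal (slope f (b + 1) (b + 2) - slope f (a - 1) a) := by
  refine (hf.monotone_rightDeriv.stieltjesFunction_measure_Ioc_le (lt_add_one b)).trans ?_
  gcongr
  · exact hf.rightDeriv_le_slope_of_mem_interior (by simp) (mem_univ _) (by linarith)
  · exact hf.slope_le_rightDeriv (by linarith)

end ConvexOn

theorem ae_liminf_rnDeriv_secondDerivMeasure_lt_top {f : ℝ → ℝ} {fn : ℕ → ℝ → ℝ}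
    (hfn : ∀ n, ConvexOn ℝ univ (fn n)) (hlim : ∀ x, Tendsto (fun n => fn n x) atTop (𝓝 (f x))) :
    ∀ᵐ x, liminf (fun n => (hfn n).secondDerivMeasure.rnDeriv volume x) atTop < ∞ := by
  have hslope : ∀ x y, Tendsto (fun n => slope (fn n) x y) atTop (𝓝 (slope f x y)) := by
    intro x y
    simp only [slope_def_field]
    exact ((hlim y).sub (hlim x)).div_const _
  have hIoc : ∀ k : ℕ, ∀ᵐ x, x ∈ Ioc (-(k : ℝ)) k →
      liminf (fun n => (hfn n).secondDerivMeasure.rnDeriv volume x) atTop < ∞ := by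
    intro k
    set c := slope f (k + 1) (k + 2) - slope f (-k - 1) (-k)
    have hbound : ∀ᶠ n in atTop,
        slope (fn n) (k + 1) (k + 2) - slope (fn n) (-k - 1) (-k) < c + 1 :=
      ((hslope _ _).sub (hslope _ _)).eventually (gt_mem_nhds (lt_add_one c))
    refine ae_liminf_rnDeriv_lt_top_of_frequently_le measurableSet_Ioc
      (ENNReal.ofReal_ne_top (r := c + 1)) (hbound.mono fun n hn => ?_).frequently
    exact ((hfn n).secondDerivMeasure_Ioc_le _ _).trans (ENNReal.ofReal_le_ofReal hn.le)
  filter_upwards [ae_all_iff.2 hIoc] with x hx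
  obtain ⟨k, hk⟩ := exists_nat_gt |x|
  exact hx k ⟨neg_lt_of_abs_lt hk, (le_abs_self x).trans hk.le⟩

theorem stmt4_general (f : ℝ → ℝ) (fn : ℕ → ℝ → ℝ)
    (hfn : ∀ n, ConvexOn ℝ Set.univ (fn n))
    (hlim : ∀ x : ℝ, Filter.Tendsto (fun n => fn n x) Filter.atTop (nhds (f x))) :
    ∃ φ : ℕ → ℝ → ℝ, (∀ n, Monotone (φ n)) ∧
      (∀ n, ∀ x : ℝ, DifferentiableAt ℝ (fn n) x → φ n x = deriv (fn n) x) ∧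
      ∃ D : Set ℝ, MeasureTheory.volume Dᶜ = 0 ∧
        ∀ x ∈ D,
          (∀ n, DifferentiableAt ℝ (fn n) x ∧ DifferentiableAt ℝ (φ n) x ∧
            0 ≤ deriv (φ n) x) ∧
          Filter.liminf (fun n => ((deriv (φ n) x : ℝ) : EReal)) Filter.atTop < ⊤ := by
  let g n x := (hfn n).secondDerivMeasure.rnDeriv volume x
  refine ⟨fun n x => derivWithin (fn n) (Ioi x) x, fun n => (hfn n).monotone_rightDeriv,
    fun n x hx => hx.derivWithin (uniqueDiffWithinAt_Ioi x), ?_⟩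
  have hD : ∀ᵐ x, (∀ n, DifferentiableAt ℝ (fn n) x ∧
      HasDerivAt (fun y => derivWithin (fn n) (Ioi y) y) (g n x).toReal x) ∧
      liminf (fun n => g n x) atTop < ∞ := by
    filter_upwards [ae_all_iff.2 fun n => (hfn n).ae_differentiableAt,
      ae_all_iff.2 fun n => (hfn n).ae_hasDerivAt_rightDeriv,
      ae_liminf_rnDeriv_secondDerivMeasure_lt_top hfn hlim] with x hdiff hderiv hlt
    exact ⟨fun n => ⟨hdiff n, hderiv n⟩, hlt⟩
  refine ⟨_, mem_ae_iff.1 hD, fun x ⟨hx, hlt⟩ =>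
    ⟨fun n => ⟨(hx n).1, (hx n).2.differentiableAt, ?_⟩, ?_⟩⟩
  · exact (hx n).2.deriv ▸ ENNReal.toReal_nonneg
  · simpa only [fun n => (hx n).2.deriv] using liminf_toReal_lt_top hlt

/-- "fₙ is twice differentiable at x" is formalized in the Alexandrov sense described in
the paper: the a.e.-defined derivative of the convex function `fn n` admits a monotone
extension `φ n` to all of `ℝ` (agreeing with `deriv (fn n)` at every point of
differentiability), `fn n` is differentiable at `x`, the extension `φ n` is differentiable
at `x`, and `fₙ''(x) := deriv (φ n) x`. -/
theorem stmt4 (f : ℝ → ℝ) (fn : ℕ → ℝ → ℝ)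
    (hf : ConvexOn ℝ Set.univ f) (hfn : ∀ n, ConvexOn ℝ Set.univ (fn n))
    (hlim : ∀ x : ℝ, Filter.Tendsto (fun n => fn n x) Filter.atTop (nhds (f x))) :
    ∃ φ : ℕ → ℝ → ℝ, (∀ n, Monotone (φ n)) ∧
      (∀ n, ∀ x : ℝ, DifferentiableAt ℝ (fn n) x → φ n x = deriv (fn n) x) ∧
      ∃ D : Set ℝ, MeasureTheory.volume Dᶜ = 0 ∧
        ∀ x ∈ D,
          (∀ n, DifferentiableAt ℝ (fn n) x ∧ DifferentiableAt ℝ (φ n) x ∧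
            0 ≤ deriv (φ n) x) ∧
          Filter.liminf (fun n => ((deriv (φ n) x : ℝ) : EReal)) Filter.atTop < ⊤ :=
  stmt4_general f fn hfn hlim
end

section
/- Let F : ℝ³ → ℝ satisfy (i) F(0) ≤ F(x) for all x, (ii) F(x) ≤ ‖x‖²/2 + F(0) for all x, and (iii) x ↦ ‖x‖²/2 − F(x) is convex. Then for every ξ ∈ ℝ³ with ‖ξ‖ < 1 and every k ∈ ℝ³ one has F(ξ − k) − F(ξ) + ‖k‖ ≥ (1 − ‖ξ‖)·‖k‖. -/
/-!
Write `G x = ‖x‖² / 2 - F x`. The hypotheses say that `G` is convex, minimal at `0`, and grows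
at most like `‖x‖² / 2` away from `0`; the claim is `F ξ - F (ξ - k) ≤ ‖ξ‖ ‖k‖`. When `‖ξ‖ ≤ ‖k‖`
this already follows from `F 0 ≤ F (ξ - k)` and `F ξ ≤ ‖ξ‖² / 2 + F 0`. Otherwise extend the
segment from `ξ` to `ξ - k` to a point `w` with `‖w - ξ‖ = ‖ξ‖`: by convexity the increment of `G`
from `ξ` to `ξ - k` is at most `‖k‖ / ‖ξ‖` times its increment from `ξ` to `w`, which is at most
`‖w‖² / 2`.
-/

open Set RealInnerProductSpace

lemma ConvexOn.add_smul_sub_le {E : Type*} [AddCommGroup E] [Module ℝ E] {G : E → ℝ}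
    (hG : ConvexOn ℝ univ G) (x v : E) {t : ℝ} (ht₀ : 0 ≤ t) (ht₁ : t ≤ 1) :
    G (x + t • v) - G x ≤ t * (G (x + v) - G x) := by
  have hx : x + t • v = (1 - t) • x + t • (x + v) := by
    rw [smul_add, sub_smul, one_smul]; abel
  have := hG.2 (mem_univ x) (mem_univ (x + v)) (sub_nonneg.mpr ht₁) ht₀ (sub_add_cancel 1 t)
  rw [hx]
  simp only [smul_eq_mul] at this
  linarith

section QuadraticGrowth

variable {E : Type*} [NormedAddCommGroup E] [InnerProductSpace ℝ E] {G : E → ℝ}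

lemma sub_le_of_convexOn_of_norm_le (hG : ConvexOn ℝ univ G) (hmin : ∀ x, G 0 ≤ G x)
    (hquad : ∀ x, G x ≤ G 0 + ‖x‖ ^ 2 / 2) {ξ k : E} (hk : ‖k‖ ≤ ‖ξ‖) :
    G (ξ - k) - G ξ ≤ ‖ξ‖ * ‖k‖ - ⟪ξ, k⟫ := by
  rcases eq_or_ne k 0 with rfl | hk₀
  · simp
  have hk_pos : 0 < ‖k‖ := norm_pos_iff.mpr hk₀
  set r := ‖ξ‖ / ‖k‖
  have hr_pos : 0 < r := div_pos (hk_pos.trans_le hk) hk_pos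
  have hrk : r * ‖k‖ = ‖ξ‖ := div_mul_cancel₀ _ hk_pos.ne'
  have hr_one : 1 ≤ r := (one_le_div hk_pos).mpr hk
  have hsegment : ξ + r⁻¹ • -(r • k) = ξ - k := by
    rw [smul_neg, smul_smul, inv_mul_cancel₀ hr_pos.ne', one_smul, sub_eq_add_neg]
  have hconv := hG.add_smul_sub_le ξ (-(r • k)) (inv_nonneg.mpr hr_pos.le) (inv_le_one_of_one_le₀ hr_one)
  rw [hsegment, ← sub_eq_add_neg] at hconv
  have hfar : ‖ξ - r • k‖ ^ 2 = ‖ξ‖ ^ 2 - 2 * (r * ⟪ξ, k⟫) + ‖ξ‖ ^ 2 := by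
    rw [norm_sub_sq_real, real_inner_smul_right, norm_smul, Real.norm_of_nonneg hr_pos.le, hrk]
  have hincr : G (ξ - r • k) - G ξ ≤ ‖ξ - r • k‖ ^ 2 / 2 := by
    linarith [hquad (ξ - r • k), hmin ξ]
  calc G (ξ - k) - G ξ ≤ r⁻¹ * (G (ξ - r • k) - G ξ) := hconv
    _ ≤ r⁻¹ * (‖ξ - r • k‖ ^ 2 / 2) := by gcongr
    _ = ‖ξ‖ * ‖k‖ - ⟪ξ, k⟫ := by
      rw [hfar, ← hrk]; field_simp; ring

lemma sub_le_of_convexOn (hG : ConvexOn ℝ univ G) (hmin : ∀ x, G 0 ≤ G x)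
    (hquad : ∀ x, G x ≤ G 0 + ‖x‖ ^ 2 / 2) (ξ k : E) :
    G (ξ - k) - G ξ ≤ ‖ξ‖ * ‖k‖ - ⟪ξ, k⟫ + ‖k‖ ^ 2 / 2 := by
  rcases le_total ‖k‖ ‖ξ‖ with hk | hk
  · linarith [sub_le_of_convexOn_of_norm_le hG hmin hquad hk, sq_nonneg ‖k‖]
  · have hnear : ‖ξ‖ ^ 2 / 2 ≤ ‖ξ‖ * ‖k‖ := by nlinarith [norm_nonneg ξ]
    linarith [hquad (ξ - k), hmin ξ, norm_sub_sq_real ξ k]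

end QuadraticGrowth

theorem stmt6 (F : EuclideanSpace ℝ (Fin 3) → ℝ)
    (h1 : ∀ x, F 0 ≤ F x)
    (h2 : ∀ x, F x ≤ ‖x‖ ^ 2 / 2 + F 0)
    (h3 : ConvexOn ℝ Set.univ fun x => ‖x‖ ^ 2 / 2 - F x) :
    ∀ ξ : EuclideanSpace ℝ (Fin 3), ‖ξ‖ < 1 →
      ∀ k : EuclideanSpace ℝ (Fin 3),
        F (ξ - k) - F ξ + ‖k‖ ≥ (1 - ‖ξ‖) * ‖k‖ := by
  intro ξ _ k
  have hG := sub_le_of_convexOn h3 (fun x => by simp only [norm_zero, zero_pow two_ne_zero, zero_div]; linarith [h2 x])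
    (fun x => by simp only [norm_zero, zero_pow two_ne_zero, zero_div]; linarith [h1 x]) ξ k
  linarith [norm_sub_sq_real ξ k]
end

section
/- Let F : ℝ³ → ℝ satisfy (i) F(0) ≤ F(x) for all x, (ii) F(x) ≤ ‖x‖²/2 + F(0) for all x, and (iii) x ↦ ‖x‖²/2 − F(x) is convex. Let m > 0 and let ξ ∈ ℝ³ with ‖ξ‖ ≤ 1. Then the infimum over k ∈ ℝ³ of F(ξ − k) − F(ξ) + √(m² + ‖k‖²) is strictly positive. -/
set_option maxHeartbeats 1000000

open RealInnerProductSpace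

theorem stmt7 (F : EuclideanSpace ℝ (Fin 3) → ℝ)
    (h1 : ∀ x, F 0 ≤ F x)
    (h2 : ∀ x, F x ≤ ‖x‖ ^ 2 / 2 + F 0)
    (h3 : ConvexOn ℝ Set.univ fun x => ‖x‖ ^ 2 / 2 - F x)
    (m : ℝ) (hm : 0 < m)
    (ξ : EuclideanSpace ℝ (Fin 3)) (hξ : ‖ξ‖ ≤ 1) :
    0 < ⨅ k : EuclideanSpace ℝ (Fin 3),
        (F (ξ - k) - F ξ + Real.sqrt (m ^ 2 + ‖k‖ ^ 2)) := by
  have hs1 : (0:ℝ) < Real.sqrt (m ^ 2 + 1) + 1 := by positivity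
  set c : ℝ := m ^ 2 / (Real.sqrt (m ^ 2 + 1) + 1) with hc
  have hcpos : 0 < c := by positivity
  set δ : ℝ := min c (1/2) with hδ
  have hδpos : 0 < δ := lt_min hcpos (by norm_num)
  clear_value δ c
  have key : ∀ k : EuclideanSpace ℝ (Fin 3),
      δ ≤ F (ξ - k) - F ξ + Real.sqrt (m ^ 2 + ‖k‖ ^ 2) := by
    intro k
    set t : ℝ := ‖k‖ with ht
    have ht0 : 0 ≤ t := by rw [ht]; exact norm_nonneg k
    clear_value t
    set ω : ℝ := Real.sqrt (m ^ 2 + t ^ 2) with hω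
    clear_value ω
    have hω2 : ω ^ 2 = m ^ 2 + t ^ 2 := by
      rw [hω]; exact Real.sq_sqrt (by positivity)
    have hωk : t ≤ ω := by
      rw [hω]
      have := Real.sqrt_le_sqrt (show t ^ 2 ≤ m ^ 2 + t ^ 2 by nlinarith)
      simpa [Real.sqrt_sq ht0] using this
    have hωm : m ≤ ω := by
      rw [hω]
      have := Real.sqrt_le_sqrt (show m ^ 2 ≤ m ^ 2 + t ^ 2 by nlinarith)
      simpa [Real.sqrt_sq hm.le] using this
    rcases le_or_gt t 1 with hk1 | hk1
    · -- small k case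
      have hωle : ω ≤ Real.sqrt (m ^ 2 + 1) := by
        rw [hω]; exact Real.sqrt_le_sqrt (by nlinarith)
      have hcω : c ≤ ω - t := by
        rw [hc, div_le_iff₀ hs1]
        nlinarith [Real.sqrt_nonneg (m ^ 2 + 1)]
      -- main estimate: F (ξ - k) - F ξ ≥ t^2/2 - t
      have hmain : t ^ 2 / 2 - t ≤ F (ξ - k) - F ξ := by
        rcases eq_or_ne k 0 with rfl | hk0
        · have h0 : t = 0 := by simp [ht]
          simp only [sub_zero, h0]
          norm_num
        · have htpos : 0 < t := by rw [ht]; exact norm_pos_iff.mpr hk0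
          set u : EuclideanSpace ℝ (Fin 3) := t⁻¹ • k with hu
          have hku : t • u = k := by
            rw [hu, smul_smul, mul_inv_cancel₀ (ne_of_gt htpos), one_smul]
          have hnu : ‖u‖ = 1 := by
            rw [hu, norm_smul, norm_inv, Real.norm_eq_abs, abs_of_nonneg ht0,
              ← ht, inv_mul_cancel₀ (ne_of_gt htpos)]
          clear_value u
          have hcomb : ξ - k = (1 - t) • ξ + t • (ξ - u) := by
            rw [smul_sub, hku, sub_smul, one_smul]
            abel
          have hconv := h3.2 (Set.mem_univ ξ) (Set.mem_univ (ξ - u))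
            (by linarith : (0:ℝ) ≤ 1 - t) ht0 (by ring)
          rw [← hcomb] at hconv
          simp only [smul_eq_mul] at hconv
          have e1 : ‖ξ - k‖ ^ 2 = ‖ξ‖ ^ 2 - 2 * ⟪ξ, k⟫ + t ^ 2 := by
            rw [ht]; exact norm_sub_sq_real ξ k
          have e2 : ‖ξ - u‖ ^ 2 = ‖ξ‖ ^ 2 - 2 * ⟪ξ, u⟫ + 1 := by
            rw [norm_sub_sq_real, hnu]; ring
          have e3 : ⟪ξ, k⟫ = t * ⟪ξ, u⟫ := by
            rw [← hku, real_inner_smul_right]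
          have hFξ : F ξ ≤ ‖ξ‖ ^ 2 / 2 + F 0 := h2 ξ
          have hFu : F 0 ≤ F (ξ - u) := h1 (ξ - u)
          have hξ2 : ‖ξ‖ ^ 2 ≤ 1 := by nlinarith [norm_nonneg ξ]
          rw [e1, e2, e3] at hconv
          nlinarith [mul_le_mul_of_nonneg_left hFξ ht0,
            mul_le_mul_of_nonneg_left hFu ht0,
            mul_le_mul_of_nonneg_left hξ2 ht0]
      have hd : δ ≤ c := by rw [hδ]; exact min_le_left _ _
      nlinarith
    · -- large k case
      have hω1 : (1:ℝ) ≤ ω := le_trans hk1.le hωk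
      have hFk : F 0 ≤ F (ξ - k) := h1 (ξ - k)
      have hFξ : F ξ ≤ ‖ξ‖ ^ 2 / 2 + F 0 := h2 ξ
      have hξ2 : ‖ξ‖ ^ 2 ≤ 1 := by nlinarith [norm_nonneg ξ]
      have hd : δ ≤ 1/2 := by rw [hδ]; exact min_le_right _ _
      nlinarith
  exact lt_of_lt_of_le hδpos (le_ciInf key)
end

section
/- Define, for k ∈ ℝ³ with k₁² + k₂² ≠ 0, the polarization vectors ε₁(k) := (k₂, −k₁, 0)/√(k₁² + k₂²) and ε₂(k) := (k/‖k‖) × ε₁(k) (the cross product of the unit vector k/‖k‖ with ε₁(k)). Then for every such k, every λ ∈ {1,2}, and every j ∈ {1,2,3}, the partial derivative ∂ε_λ/∂k_j exists at k and its Euclidean norm satisfies ‖∂ε_λ(k)/∂k_j‖ ≤ 1/√(k₁² + k₂²). -/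
/-!
Both polarization vectors are normalizations of polynomial maps, `ε₁ = u₁/‖u₁‖` and
`ε₂ = u₂/‖u₂‖` with `u₁ = k × e₃`, `u₂ = k × (k × e₃)`, `‖u₁‖ = ρ := √(k₁² + k₂²)` and
`‖u₂‖ = ρ‖k‖`. Differentiating `u/‖u‖` along `u'` gives the component of `u'` orthogonal to `u`
divided by `‖u‖`, whose squared norm is the Gram determinant `‖u‖²‖u'‖² - ⟪u, u'⟫²` divided by
`‖u‖⁴`. In a direction `D`, for `ε₁` this is at most `‖u₁'‖²/ρ² ≤ ‖D‖²/ρ²`; for `ε₂` the Gram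
determinant falls short of `ρ²‖k‖⁴‖D‖²` by an explicit sum of squares.
-/

/-- The first polarization vector `ε₁(k) = (k₂, −k₁, 0)/√(k₁² + k₂²)`. -/
noncomputable def eps1 (k : EuclideanSpace ℝ (Fin 3)) : EuclideanSpace ℝ (Fin 3) :=
  (Real.sqrt (k 0 ^ 2 + k 1 ^ 2))⁻¹ •
    (EuclideanSpace.equiv (Fin 3) ℝ).symm ![k 1, -(k 0), 0]

/-- The vector cross product on `ℝ³`. -/
noncomputable def cross3 (u v : EuclideanSpace ℝ (Fin 3)) : EuclideanSpace ℝ (Fin 3) :=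
  (EuclideanSpace.equiv (Fin 3) ℝ).symm
    ![u 1 * v 2 - u 2 * v 1, u 2 * v 0 - u 0 * v 2, u 0 * v 1 - u 1 * v 0]

/-- The second polarization vector `ε₂(k) = (k/‖k‖) × ε₁(k)`. -/
noncomputable def eps2 (k : EuclideanSpace ℝ (Fin 3)) : EuclideanSpace ℝ (Fin 3) :=
  cross3 (‖k‖⁻¹ • k) (eps1 k)

open Real NormedSpace
open scoped RealInnerProductSpace

section Normalize

variable {E : Type*} [NormedAddCommGroup E] [InnerProductSpace ℝ E]

theorem HasDerivAt.normalize {u : ℝ → E} {w : E} {t : ℝ} (hu : HasDerivAt u w t)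
    (h0 : u t ≠ 0) :
    HasDerivAt (fun s => normalize (u s))
      ((‖u t‖ ^ 3)⁻¹ • (‖u t‖ ^ 2 • w - ⟪u t, w⟫ • u t)) t := by
  have hpos : 0 < ‖u t‖ := norm_pos_iff.2 h0
  have hnorm : HasDerivAt (fun s => ‖u s‖) (⟪u t, w⟫ / ‖u t‖) t := by
    have := hu.norm_sq.sqrt (by positivity)
    simp only [sqrt_sq (norm_nonneg _)] at this
    convert this using 1
    field_simp
  refine ((hnorm.inv hpos.ne').smul hu).congr_deriv ?_
  rw [smul_sub, smul_smul, smul_smul, sub_eq_add_neg, ← neg_smul, Pi.inv_apply]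
  congr 2 <;> field_simp

theorem norm_sq_smul_sub_inner_smul (u w : E) :
    ‖‖u‖ ^ 2 • w - ⟪u, w⟫ • u‖ ^ 2 = ‖u‖ ^ 2 * (‖u‖ ^ 2 * ‖w‖ ^ 2 - ⟪u, w⟫ ^ 2) := by
  simp only [norm_sub_sq_real, norm_smul, inner_smul_left, inner_smul_right,
    real_inner_comm w u, Real.norm_eq_abs, abs_pow, abs_norm, conj_trivial, mul_pow, sq_abs]
  ring

theorem norm_normalize_deriv_le {u w : E} {C : ℝ} (hC : 0 ≤ C)
    (h : ‖u‖ ^ 2 * ‖w‖ ^ 2 - ⟪u, w⟫ ^ 2 ≤ (‖u‖ ^ 2 * C) ^ 2) (h0 : u ≠ 0) :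
    ‖(‖u‖ ^ 3)⁻¹ • (‖u‖ ^ 2 • w - ⟪u, w⟫ • u)‖ ≤ C := by
  have hpos : 0 < ‖u‖ := norm_pos_iff.2 h0
  rw [norm_smul, norm_inv, norm_pow, norm_norm, inv_mul_le_iff₀ (by positivity),
    ← pow_le_pow_iff_left₀ (norm_nonneg _) (by positivity) two_ne_zero,
    norm_sq_smul_sub_inner_smul]
  calc ‖u‖ ^ 2 * (‖u‖ ^ 2 * ‖w‖ ^ 2 - ⟪u, w⟫ ^ 2) ≤ ‖u‖ ^ 2 * (‖u‖ ^ 2 * C) ^ 2 := by gcongr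
    _ = (‖u‖ ^ 3 * C) ^ 2 := by ring

end Normalize

theorem hasDerivAt_vec3 {f g h : ℝ → ℝ} {f' g' h' t : ℝ} (hf : HasDerivAt f f' t)
    (hg : HasDerivAt g g' t) (hh : HasDerivAt h h' t) :
    HasDerivAt (fun s => !₂[f s, g s, h s]) !₂[f', g', h'] t := by
  have : HasDerivAt (fun s => ![f s, g s, h s]) ![f', g', h'] t :=
    hasDerivAt_pi.2 fun i => by fin_cases i <;> simpa
  exact (EuclideanSpace.equiv (Fin 3) ℝ).symm.hasFDerivAt.comp_hasDerivAt t this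

theorem hasDerivAt_add_smul_apply {ι : Type*} (k D : EuclideanSpace ℝ ι) (i : ι) (t : ℝ) :
    HasDerivAt (fun s => (k + s • D) i) (D i) t := by
  simpa using ((hasDerivAt_id t).mul_const (D i)).const_add (k i)

theorem norm_sq_vec3 (x y z : ℝ) : ‖!₂[x, y, z]‖ ^ 2 = x ^ 2 + y ^ 2 + z ^ 2 := by
  simp [EuclideanSpace.norm_sq_eq, Fin.sum_univ_three]

theorem inner_vec3 (x y z x' y' z' : ℝ) :
    ⟪!₂[x, y, z], !₂[x', y', z']⟫ = x * x' + y * y' + z * z' := by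
  simp [PiLp.inner_apply, Fin.sum_univ_three]
  ring

theorem EuclideanSpace.norm_sq_fin3 (k : EuclideanSpace ℝ (Fin 3)) :
    ‖k‖ ^ 2 = k 0 ^ 2 + k 1 ^ 2 + k 2 ^ 2 := by
  simp [EuclideanSpace.norm_sq_eq, Fin.sum_univ_three]

-- `k × e₃` and `k × (k × e₃)`
noncomputable def eps1Dir (k : EuclideanSpace ℝ (Fin 3)) : EuclideanSpace ℝ (Fin 3) :=
  !₂[k 1, -k 0, 0]

noncomputable def eps2Dir (k : EuclideanSpace ℝ (Fin 3)) : EuclideanSpace ℝ (Fin 3) :=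
  !₂[k 0 * k 2, k 1 * k 2, -(k 0 ^ 2 + k 1 ^ 2)]

theorem norm_eps1Dir (k : EuclideanSpace ℝ (Fin 3)) : ‖eps1Dir k‖ = √(k 0 ^ 2 + k 1 ^ 2) := by
  rw [← sqrt_sq (norm_nonneg _), eps1Dir, norm_sq_vec3]
  ring_nf

theorem norm_eps2Dir (k : EuclideanSpace ℝ (Fin 3)) :
    ‖eps2Dir k‖ = √(k 0 ^ 2 + k 1 ^ 2) * ‖k‖ := by
  rw [← sqrt_sq (norm_nonneg _), eps2Dir, norm_sq_vec3, ← sqrt_sq (norm_nonneg k),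
    ← sqrt_mul (by positivity), EuclideanSpace.norm_sq_fin3]
  ring_nf

theorem norm_eps1Dir_le (D : EuclideanSpace ℝ (Fin 3)) : ‖eps1Dir D‖ ≤ ‖D‖ := by
  rw [← pow_le_pow_iff_left₀ (norm_nonneg _) (norm_nonneg _) two_ne_zero, eps1Dir, norm_sq_vec3,
    EuclideanSpace.norm_sq_fin3]
  nlinarith [sq_nonneg (D 2)]

theorem eps1_eq_normalize (k : EuclideanSpace ℝ (Fin 3)) : eps1 k = normalize (eps1Dir k) := by
  rw [NormedSpace.normalize, norm_eps1Dir]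
  rfl

theorem eps2_eq_normalize (k : EuclideanSpace ℝ (Fin 3)) : eps2 k = normalize (eps2Dir k) := by
  rw [NormedSpace.normalize, norm_eps2Dir]
  ext i
  fin_cases i <;> simp [eps2, cross3, eps1, eps2Dir] <;> ring

theorem hasDerivAt_eps1Dir_add_smul (k D : EuclideanSpace ℝ (Fin 3)) (t : ℝ) :
    HasDerivAt (fun s : ℝ => eps1Dir (k + s • D)) (eps1Dir D) t :=
  hasDerivAt_vec3 (hasDerivAt_add_smul_apply k D 1 t) (hasDerivAt_add_smul_apply k D 0 t).neg
    (hasDerivAt_const t 0)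

theorem hasDerivAt_eps2Dir_add_smul (k D : EuclideanSpace ℝ (Fin 3)) :
    HasDerivAt (fun t : ℝ => eps2Dir (k + t • D))
      !₂[D 0 * k 2 + k 0 * D 2, D 1 * k 2 + k 1 * D 2, -(2 * k 0 * D 0 + 2 * k 1 * D 1)] 0 := by
  have hline := hasDerivAt_add_smul_apply k D
  unfold eps2Dir
  convert hasDerivAt_vec3 ((hline 0 0).mul (hline 2 0)) ((hline 1 0).mul (hline 2 0))
    (((hline 0 0).pow 2).add ((hline 1 0).pow 2)).neg using 2 <;> simp

theorem gram_eps2Dir_le (k D : EuclideanSpace ℝ (Fin 3)) :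
    ‖eps2Dir k‖ ^ 2 *
        ‖!₂[D 0 * k 2 + k 0 * D 2, D 1 * k 2 + k 1 * D 2, -(2 * k 0 * D 0 + 2 * k 1 * D 1)]‖ ^ 2 -
      ⟪eps2Dir k,
        !₂[D 0 * k 2 + k 0 * D 2, D 1 * k 2 + k 1 * D 2, -(2 * k 0 * D 0 + 2 * k 1 * D 1)]⟫ ^ 2 ≤
      (k 0 ^ 2 + k 1 ^ 2) * (‖k‖ ^ 2) ^ 2 * ‖D‖ ^ 2 := by
  rw [eps2Dir, norm_sq_vec3, norm_sq_vec3, inner_vec3, EuclideanSpace.norm_sq_fin3,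
    EuclideanSpace.norm_sq_fin3]
  have hsos : 0 ≤ (k 0 ^ 2 + k 1 ^ 2) * (k 0 ^ 2 + k 1 ^ 2 + k 2 ^ 2) *
      ((k 0 * D 0 + k 1 * D 1 + k 2 * D 2) ^ 2 + (k 0 * D 1 - k 1 * D 0) ^ 2) +
      k 2 ^ 2 * (k 2 * (k 0 * D 0 + k 1 * D 1) - (k 0 ^ 2 + k 1 ^ 2) * D 2) ^ 2 := by positivity
  linear_combination hsos

theorem exists_hasDerivAt_eps1_norm_le (k D : EuclideanSpace ℝ (Fin 3))
    (hk : k 0 ^ 2 + k 1 ^ 2 ≠ 0) :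
    ∃ v, HasDerivAt (fun t : ℝ => eps1 (k + t • D)) v 0 ∧ ‖v‖ ≤ ‖D‖ / √(k 0 ^ 2 + k 1 ^ 2) := by
  have hρ : 0 < √(k 0 ^ 2 + k 1 ^ 2) := sqrt_pos.2 (by positivity)
  have hne : eps1Dir k ≠ 0 := by rw [← norm_ne_zero_iff, norm_eps1Dir]; exact hρ.ne'
  have hu0 : k + (0 : ℝ) • D = k := by simp
  simp only [eps1_eq_normalize]
  refine ⟨_, (hasDerivAt_eps1Dir_add_smul k D 0).normalize (by rwa [hu0]),
    norm_normalize_deriv_le (by positivity) ?_ (by rwa [hu0])⟩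
  rw [hu0, norm_eps1Dir]
  calc _ ≤ √(k 0 ^ 2 + k 1 ^ 2) ^ 2 * ‖eps1Dir D‖ ^ 2 := sub_le_self _ (sq_nonneg _)
    _ ≤ √(k 0 ^ 2 + k 1 ^ 2) ^ 2 * ‖D‖ ^ 2 := by gcongr; exact norm_eps1Dir_le D
    _ = _ := by field_simp

theorem exists_hasDerivAt_eps2_norm_le (k D : EuclideanSpace ℝ (Fin 3))
    (hk : k 0 ^ 2 + k 1 ^ 2 ≠ 0) :
    ∃ v, HasDerivAt (fun t : ℝ => eps2 (k + t • D)) v 0 ∧ ‖v‖ ≤ ‖D‖ / √(k 0 ^ 2 + k 1 ^ 2) := by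
  have hρ2 : 0 < k 0 ^ 2 + k 1 ^ 2 := by positivity
  have hk0 : 0 < ‖k‖ := norm_pos_iff.2 fun h => hk (by simp [h])
  have hne : eps2Dir k ≠ 0 := by rw [← norm_ne_zero_iff, norm_eps2Dir]; positivity
  have hu0 : k + (0 : ℝ) • D = k := by simp
  simp only [eps2_eq_normalize]
  refine ⟨_, (hasDerivAt_eps2Dir_add_smul k D).normalize (by rwa [hu0]),
    norm_normalize_deriv_le (by positivity) ?_ (by rwa [hu0])⟩
  rw [hu0]
  refine (gram_eps2Dir_le k D).trans_eq ?_
  rw [norm_eps2Dir]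
  field_simp
  rw [sq_sqrt hρ2.le, mul_comm]

theorem stmt11 (k : EuclideanSpace ℝ (Fin 3)) (hk : k 0 ^ 2 + k 1 ^ 2 ≠ 0) (j : Fin 3) :
    (∃ v : EuclideanSpace ℝ (Fin 3),
        HasDerivAt (fun t : ℝ => eps1 (k + t • EuclideanSpace.single j (1 : ℝ))) v 0 ∧
        ‖v‖ ≤ 1 / Real.sqrt (k 0 ^ 2 + k 1 ^ 2)) ∧
    (∃ v : EuclideanSpace ℝ (Fin 3),
        HasDerivAt (fun t : ℝ => eps2 (k + t • EuclideanSpace.single j (1 : ℝ))) v 0 ∧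
        ‖v‖ ≤ 1 / Real.sqrt (k 0 ^ 2 + k 1 ^ 2)) := by
  have hD : ‖EuclideanSpace.single j (1 : ℝ)‖ = 1 := by simp
  constructor
  · simpa only [hD] using exists_hasDerivAt_eps1_norm_le k (EuclideanSpace.single j 1) hk
  · simpa only [hD] using exists_hasDerivAt_eps2_norm_le k (EuclideanSpace.single j 1) hk
end
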